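/- arXiv:2102.10568 — 3 statements merged into one kernel-verified Lean document; each statement's English description precedes it below -/
import Mathlib

section
/- Let G be a connected interval graph and let D_s and D_t be two dominating multisets of G with |D_s| = |D_t|. Then D_t is TS-reachable from D_s; that is, there always exists a token-sliding reconfiguration sequence of dominating multisets from D_s to D_t. -/
/-- A multiset `D` of vertices dominates `G`: every vertex occurs in `D`
or is adjacent to a vertex occurring in `D`. -/
def IsDominatingMultiset {V : Type*} (G : SimpleGraph V) (D : Multiset V) : Prop :=
  ∀ w : V, w ∈ D ∨ ∃ u ∈ D, G.Adj u w

/-- A token slide along an edge `uv`: remove one copy of `u`, add one copy of `v`. -/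
def TokenSlide {V : Type*} [DecidableEq V] (G : SimpleGraph V) (D D' : Multiset V) : Prop :=
  ∃ u v : V, G.Adj u v ∧ u ∈ D ∧ D' = v ::ₘ D.erase u

/-- One step of token-sliding reconfiguration between dominating multisets. -/
def TSStep {V : Type*} [DecidableEq V] (G : SimpleGraph V) (D D' : Multiset V) : Prop :=
  IsDominatingMultiset G D ∧ IsDominatingMultiset G D' ∧ TokenSlide G D D'

/-- `D'` is TS-reachable from `D`: there is a finite sequence of dominating multisets
from `D` to `D'` in which each multiset is obtained from the previous one by a token slide. -/
def TSReachable {V : Type*} [DecidableEq V] (G : SimpleGraph V) (D D' : Multiset V) : Prop :=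
  Relation.ReflTransGen (TSStep G) D D'

/-- `G` is an interval graph: vertices can be assigned nonempty closed real intervals
so that two distinct vertices are adjacent iff their intervals intersect. -/
def IsIntervalGraph {V : Type*} (G : SimpleGraph V) : Prop :=
  ∃ a b : V → ℝ, (∀ v, a v ≤ b v) ∧
    ∀ u v : V, u ≠ v →
      (G.Adj u v ↔ (Set.Icc (a u) (b u) ∩ Set.Icc (a v) (b v)).Nonempty)

/-!
Token sliding in a connected graph is easy as long as the tokens that stay put already
dominate: the remaining tokens can then be slid anywhere, one at a time. In an interval
graph we reduce to that situation greedily. Let `w` be the undominated vertex whose interval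
ends first and `c` the closed neighbour of `w` whose interval ends last. Any token `u`
dominating `w` can be slid to `c`, directly or via `w`, keeping domination throughout,
because every not-yet-dominated vertex seen by `u` is also seen by `c` (and, in the
two-slide case, by `w`). Doing this in both multisets fixes a common token on `c`; the set of
vertices still to be dominated shrinks, and induction finishes the argument, token sliding
being symmetric.
-/

section

variable {V : Type*} {G : SimpleGraph V}

theorem IsDominatingMultiset.mono {D D' : Multiset V} (hD : IsDominatingMultiset G D)
    (hle : D ≤ D') : IsDominatingMultiset G D' := fun w =>
  (hD w).imp (Multiset.mem_of_le hle) fun ⟨u, hu, huw⟩ => ⟨u, Multiset.mem_of_le hle hu, huw⟩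

/-- The intervals `[a u, b u]` and `[a v, b v]` intersect, provided both are nonempty. -/
def IntervalsMeet (a b : V → ℝ) (u v : V) : Prop := a u ≤ b v ∧ a v ≤ b u

theorem IntervalsMeet.symm {a b : V → ℝ} {u v : V} (h : IntervalsMeet a b u v) :
    IntervalsMeet a b v u :=
  ⟨h.2, h.1⟩

/-- In an interval model, `MeetsOn a b D S` says that `D` dominates `S`. -/
def MeetsOn (a b : V → ℝ) (D : Multiset V) (S : Set V) : Prop :=
  ∀ z ∈ S, ∃ x ∈ D, IntervalsMeet a b x z

/-- The body of `IsIntervalGraph`. -/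
def IsIntervalModel (G : SimpleGraph V) (a b : V → ℝ) : Prop :=
  (∀ v, a v ≤ b v) ∧
    ∀ u v : V, u ≠ v → (G.Adj u v ↔ (Set.Icc (a u) (b u) ∩ Set.Icc (a v) (b v)).Nonempty)

namespace IsIntervalModel

variable {a b : V → ℝ} (hG : IsIntervalModel G a b)
include hG

theorem eq_or_adj_iff {u v : V} : u = v ∨ G.Adj u v ↔ IntervalsMeet a b u v := by
  by_cases huv : u = v
  · subst huv
    simpa [IntervalsMeet] using hG.1 u
  · rw [hG.2 u v huv, Set.Icc_inter_Icc, Set.nonempty_Icc, max_le_iff, le_min_iff, le_min_iff]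
    have := hG.1 u
    have := hG.1 v
    simp only [huv, false_or, IntervalsMeet]
    tauto

theorem isDominatingMultiset_iff {D : Multiset V} :
    IsDominatingMultiset G D ↔ MeetsOn a b D Set.univ := by
  simp only [IsDominatingMultiset, MeetsOn, Set.mem_univ, true_implies, ← hG.eq_or_adj_iff]
  refine forall_congr' fun z => ⟨?_, ?_⟩
  · rintro (hz | ⟨x, hx, hxz⟩)
    exacts [⟨z, hz, .inl rfl⟩, ⟨x, hx, .inr hxz⟩]
  · rintro ⟨x, hx, rfl | hxz⟩
    exacts [.inl hx, .inr ⟨x, hx, hxz⟩]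

theorem exists_intervalsMeet_forall_le [Finite V] (w : V) :
    ∃ c, IntervalsMeet a b w c ∧ ∀ x, IntervalsMeet a b w x → b x ≤ b c := by
  obtain ⟨c, hwc, hc⟩ := Set.exists_max_image {x | IntervalsMeet a b w x} b (Set.toFinite _)
    ⟨w, hG.1 w, hG.1 w⟩
  exact ⟨c, hwc, hc⟩

end IsIntervalModel

variable [DecidableEq V]

namespace MeetsOn

variable {a b : V → ℝ} {U : Set V} {D : Multiset V}

theorem erase (hD : MeetsOn a b D U) (u : V) :
    MeetsOn a b (D.erase u) {z ∈ U | ¬ IntervalsMeet a b u z} := by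
  rintro z ⟨hz, huz⟩
  obtain ⟨x, hx, hxz⟩ := hD z hz
  have hxu : x ≠ u := by rintro rfl; exact huz hxz
  exact ⟨x, (Multiset.mem_erase_of_ne hxu).mpr hx, hxz⟩

theorem cons_add_erase {C : Multiset V} (hC : MeetsOn a b C Uᶜ) (hD : MeetsOn a b D U)
    {u x : V} (hux : ∀ z ∈ U, IntervalsMeet a b u z → IntervalsMeet a b x z) :
    MeetsOn a b (x ::ₘ (C + D.erase u)) Set.univ := by
  intro z _
  by_cases hz : z ∈ U
  · by_cases huz : IntervalsMeet a b u z
    · exact ⟨x, Multiset.mem_cons_self x _, hux z hz huz⟩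
    · obtain ⟨y, hy, hyz⟩ := hD.erase u z ⟨hz, huz⟩
      exact ⟨y, Multiset.mem_cons_of_mem (Multiset.mem_add.mpr (.inr hy)), hyz⟩
  · obtain ⟨y, hy, hyz⟩ := hC z hz
    exact ⟨y, Multiset.mem_cons_of_mem (Multiset.mem_add.mpr (.inl hy)), hyz⟩

end MeetsOn

theorem TSStep.symm {D D' : Multiset V} (h : TSStep G D D') : TSStep G D' D := by
  obtain ⟨hD, hD', u, v, huv, hu, rfl⟩ := h
  exact ⟨hD', hD, v, u, huv.symm, Multiset.mem_cons_self v _, by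
    rw [Multiset.erase_cons_head, Multiset.cons_erase hu]⟩

theorem TSStep.cons_cons {u v : V} {M : Multiset V} (huv : G.Adj u v)
    (hu : IsDominatingMultiset G (u ::ₘ M)) (hv : IsDominatingMultiset G (v ::ₘ M)) :
    TSStep G (u ::ₘ M) (v ::ₘ M) :=
  ⟨hu, hv, u, v, huv, Multiset.mem_cons_self u M, by rw [Multiset.erase_cons_head]⟩

theorem TSReachable.symm {D D' : Multiset V} (h : TSReachable G D D') : TSReachable G D' D :=
  have : Std.Symm (TSStep G) := ⟨fun _ _ => TSStep.symm⟩
  Std.Symm.symm (r := Relation.ReflTransGen (TSStep G)) _ _ h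

theorem TSReachable.cons_cons_of_reachable {u v : V} {M : Multiset V}
    (hM : IsDominatingMultiset G M) (huv : G.Reachable u v) :
    TSReachable G (u ::ₘ M) (v ::ₘ M) := by
  have hdom : ∀ x, IsDominatingMultiset G (x ::ₘ M) := fun x =>
    hM.mono (Multiset.le_cons_self M x)
  obtain ⟨p⟩ := huv
  induction p with
  | nil => exact .refl
  | cons h _ ih => exact .head (TSStep.cons_cons h (hdom _) (hdom _)) ih

theorem TSReachable.add_add_of_isDominatingMultiset (hconn : G.Connected) {C : Multiset V}
    (hC : IsDominatingMultiset G C) {D D' : Multiset V}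
    (hcard : Multiset.card D = Multiset.card D') : TSReachable G (C + D) (C + D') := by
  induction D using Multiset.induction generalizing C D' with
  | empty =>
    rw [(Multiset.card_eq_zero (s := D')).mp (by simpa using hcard.symm)]
    exact .refl
  | cons u D ih =>
    obtain ⟨v, hv⟩ := Multiset.card_pos_iff_exists_mem.mp (by simp [← hcard] : 0 < D'.card)
    obtain ⟨D', rfl⟩ := Multiset.exists_cons_of_mem hv
    have hslide : TSReachable G (u ::ₘ (C + D)) (v ::ₘ (C + D)) :=
      .cons_cons_of_reachable (hC.mono (Multiset.le_add_right C D)) (hconn u v)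
    have hrest : TSReachable G (v ::ₘ C + D) (v ::ₘ C + D') :=
      ih (hC.mono (Multiset.le_cons_self C v)) (by simpa using hcard)
    rw [Multiset.cons_add, Multiset.cons_add] at hrest
    rw [Multiset.add_cons, Multiset.add_cons]
    exact hslide.trans hrest

namespace IsIntervalModel

variable {a b : V → ℝ} (hG : IsIntervalModel G a b)
include hG

theorem tsReachable_cons_cons {u v : V} {M : Multiset V}
    (huv : IntervalsMeet a b u v) (hu : IsDominatingMultiset G (u ::ₘ M))
    (hv : IsDominatingMultiset G (v ::ₘ M)) : TSReachable G (u ::ₘ M) (v ::ₘ M) := by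
  rcases hG.eq_or_adj_iff.mpr huv with rfl | hadj
  · exact .refl
  · exact .single (TSStep.cons_cons hadj hu hv)

theorem exists_tsReachable_cons_add_erase {U : Set V} {w c : V} (hwU : w ∈ U)
    (hw : ∀ z ∈ U, b w ≤ b z) (hwc : IntervalsMeet a b w c)
    (hc : ∀ x, IntervalsMeet a b w x → b x ≤ b c) {C D : Multiset V}
    (hC : MeetsOn a b C Uᶜ) (hD : MeetsOn a b D U) :
    ∃ u ∈ D, TSReachable G (C + D) (c ::ₘ (C + D.erase u)) ∧
      MeetsOn a b (D.erase u) {z ∈ U | ¬ IntervalsMeet a b c z} := by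
  obtain ⟨u, hu, huw⟩ := hD w hwU
  have hbu : b u ≤ b c := hc u huw.symm
  have hcu : ∀ z ∈ U, IntervalsMeet a b u z → IntervalsMeet a b c z := fun z hz huz =>
    ⟨hwc.2.trans (hw z hz), huz.2.trans hbu⟩
  have hdom : ∀ x, (∀ z ∈ U, IntervalsMeet a b u z → IntervalsMeet a b x z) →
      IsDominatingMultiset G (x ::ₘ (C + D.erase u)) := fun x hx =>
    hG.isDominatingMultiset_iff.mpr (hC.cons_add_erase hD hx)
  refine ⟨u, hu, ?_, fun z ⟨hz, hcz⟩ => hD.erase u z ⟨hz, fun huz => hcz (hcu z hz huz)⟩⟩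
  rw [← Multiset.cons_erase hu, Multiset.erase_cons_head, Multiset.add_cons]
  by_cases huc : IntervalsMeet a b u c
  · exact hG.tsReachable_cons_cons huc (hdom u fun _ _ => id) (hdom c hcu)
  · -- otherwise `u` ends before `c` starts, so everything seen by `u` in `U` is seen by `w`
    have hbu_lt : b u < a c := not_le.mp fun h => huc ⟨(hG.1 u).trans hbu, h⟩
    have hwu : ∀ z ∈ U, IntervalsMeet a b u z → IntervalsMeet a b w z := fun z hz huz =>
      ⟨(hG.1 w).trans (hw z hz), by linarith [huz.2, hwc.2]⟩
    exact (hG.tsReachable_cons_cons huw (hdom u fun _ _ => id) (hdom w hwu)).trans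
      (hG.tsReachable_cons_cons hwc (hdom w hwu) (hdom c hcu))

theorem tsReachable_add_add [Finite V] (hconn : G.Connected) (U : Finset V)
    {C D D' : Multiset V} (hcard : Multiset.card D = Multiset.card D')
    (hC : MeetsOn a b C (↑U)ᶜ) (hD : MeetsOn a b D U) (hD' : MeetsOn a b D' U) :
    TSReachable G (C + D) (C + D') := by
  induction U using Finset.strongInduction generalizing C D D' with
  | H U ih =>
  rcases U.eq_empty_or_nonempty with rfl | hU
  · exact .add_add_of_isDominatingMultiset hconn
      (hG.isDominatingMultiset_iff.mpr (by simpa using hC)) hcard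
  classical
  obtain ⟨w, hwU, hw⟩ := U.exists_min_image b hU
  obtain ⟨c, hwc, hc⟩ := hG.exists_intervalsMeet_forall_le w
  obtain ⟨u, hu, hDc, hDrest⟩ := hG.exists_tsReachable_cons_add_erase hwU hw hwc hc hC hD
  obtain ⟨u', hu', hD'c, hD'rest⟩ := hG.exists_tsReachable_cons_add_erase hwU hw hwc hc hC hD'
  set U' := U.filter fun z => ¬ IntervalsMeet a b c z with hU'
  have hU'U : U' ⊂ U := Finset.filter_ssubset.mpr ⟨w, hwU, not_not.mpr hwc.symm⟩
  have hC' : MeetsOn a b (c ::ₘ C) (↑U')ᶜ := by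
    intro z hz
    by_cases hzU : z ∈ U
    · refine ⟨c, Multiset.mem_cons_self c C, by_contra fun hcz => hz ?_⟩
      exact Finset.mem_filter.mpr ⟨hzU, hcz⟩
    · obtain ⟨x, hx, hxz⟩ := hC z hzU
      exact ⟨x, Multiset.mem_cons_of_mem hx, hxz⟩
  have hrest := ih U' hU'U (D := D.erase u) (D' := D'.erase u')
    (by simp [Multiset.card_erase_of_mem hu, Multiset.card_erase_of_mem hu', hcard]) hC'
    (by simpa [hU'] using hDrest) (by simpa [hU'] using hD'rest)
  rw [Multiset.cons_add, Multiset.cons_add] at hrest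
  exact hDc.trans (hrest.trans hD'c.symm)

end IsIntervalModel

end

/-- In a connected interval graph, any two dominating multisets of the same size
are TS-reachable from one another. -/
theorem interval_graph_TSReachable {V : Type*} [Fintype V] [DecidableEq V]
    (G : SimpleGraph V) (hconn : G.Connected) (hint : IsIntervalGraph G)
    (Ds Dt : Multiset V)
    (hDs : IsDominatingMultiset G Ds) (hDt : IsDominatingMultiset G Dt)
    (hcard : Multiset.card Ds = Multiset.card Dt) :
    TSReachable G Ds Dt := by
  obtain ⟨a, b, hG⟩ := hint
  have hG : IsIntervalModel G a b := hG
  simpa using hG.tsReachable_add_add hconn (C := 0) Finset.univ hcard (by simp [MeetsOn])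
    (by simpa using hG.isDominatingMultiset_iff.mp hDs)
    (by simpa using hG.isDominatingMultiset_iff.mp hDt)
end

section
/- Let G be a finite simple graph and let u and v be vertices of G whose closed neighborhoods satisfy N(u) ∪ {u} ⊆ N(v) ∪ {v}. For a multiset D of vertices, let D[u→v] denote the multiset obtained from D by replacing every occurrence of u by v. If D_s and D_t are dominating multisets of G and D_t is TS-reachable from D_s, then D_t[u→v] is TS-reachable from D_s[u→v] (where TS-reachability is the reflexive–transitive closure, i.e., consecutive dominating multisets in the sequence are either equal or related by a single token slide). -/
/-- The multiset obtained from `D` by replacing every occurrence of `u` by `v`. -/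
def replaceVertex {V : Type*} [DecidableEq V] (D : Multiset V) (u v : V) : Multiset V :=
  D.map (fun x => if x = u then v else x)

/-!
Replacing `u` by `v` is the vertex map `f = update id u v`, which has two properties:
it sends each vertex `x` to a vertex whose closed neighbourhood contains that of `x`, so
the image of a dominating multiset is dominating; and it sends the ends of every edge to
equal or adjacent vertices, so the image of a token slide is either no move or again a
token slide.
-/

namespace IsDominatingMultiset

variable {V : Type*} {G : SimpleGraph V}

theorem map {f : V → V}
    (hf : ∀ x, insert x (G.neighborSet x) ⊆ insert (f x) (G.neighborSet (f x)))
    {D : Multiset V} (hD : IsDominatingMultiset G D) : IsDominatingMultiset G (D.map f) := by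
  intro w
  obtain ⟨x, hxD, hxw⟩ : ∃ x ∈ D, w ∈ insert x (G.neighborSet x) := by
    rcases hD w with hw | ⟨x, hxD, hxw⟩
    · exact ⟨w, hw, Set.mem_insert w _⟩
    · exact ⟨x, hxD, Set.mem_insert_of_mem x hxw⟩
  rcases hf x hxw with hfx | hfx
  · exact .inl (hfx ▸ Multiset.mem_map_of_mem f hxD)
  · exact .inr ⟨f x, Multiset.mem_map_of_mem f hxD, hfx⟩

end IsDominatingMultiset

namespace TokenSlide

variable {V : Type*} [DecidableEq V] {G : SimpleGraph V}

theorem map {f : V → V} (hf : ∀ a b, G.Adj a b → f a = f b ∨ G.Adj (f a) (f b))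
    {D D' : Multiset V} (hs : TokenSlide G D D') :
    D.map f = D'.map f ∨ TokenSlide G (D.map f) (D'.map f) := by
  obtain ⟨a, b, hab, haD, rfl⟩ := hs
  have hfaD : f a ∈ D.map f := Multiset.mem_map_of_mem f haD
  have hmap : (b ::ₘ D.erase a).map f = f b ::ₘ (D.map f).erase (f a) := by
    rw [Multiset.map_cons, Multiset.map_erase_of_mem f D haD]
  rw [hmap]
  rcases hf a b hab with heq | hadj
  · exact .inl (by rw [← heq, Multiset.cons_erase hfaD])
  · exact .inr ⟨f a, f b, hadj, hfaD, rfl⟩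

end TokenSlide

theorem TSReachable.map {V : Type*} [DecidableEq V] {G : SimpleGraph V} {f : V → V}
    (hdom : ∀ x, insert x (G.neighborSet x) ⊆ insert (f x) (G.neighborSet (f x)))
    (hadj : ∀ a b, G.Adj a b → f a = f b ∨ G.Adj (f a) (f b))
    {D D' : Multiset V} (hreach : TSReachable G D D') :
    TSReachable G (D.map f) (D'.map f) := by
  refine Relation.ReflTransGen.lift' (Multiset.map f) ?_ _ _ hreach
  rintro D₁ D₂ ⟨hD₁, hD₂, hs⟩
  change TSReachable G (D₁.map f) (D₂.map f)
  rcases hs.map hadj with heq | hs'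
  · exact heq ▸ Relation.ReflTransGen.refl
  · exact Relation.ReflTransGen.single ⟨hD₁.map hdom, hD₂.map hdom, hs'⟩

section Replace

variable {V : Type*} [DecidableEq V] {G : SimpleGraph V} {u v : V}

theorem replaceVertex_eq_map_update (D : Multiset V) :
    replaceVertex D u v = D.map (Function.update id u v) := by
  simp only [replaceVertex, Function.update_apply, id]

theorem closedNeighborSet_subset_update
    (h : insert u (G.neighborSet u) ⊆ insert v (G.neighborSet v)) (x : V) :
    insert x (G.neighborSet x) ⊆
      insert (Function.update id u v x) (G.neighborSet (Function.update id u v x)) := by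
  rcases eq_or_ne x u with rfl | hxu
  · simpa using h
  · simp [hxu]

theorem update_eq_or_adj
    (h : insert u (G.neighborSet u) ⊆ insert v (G.neighborSet v)) {a b : V} (hab : G.Adj a b) :
    Function.update id u v a = Function.update id u v b ∨
      G.Adj (Function.update id u v a) (Function.update id u v b) := by
  rcases eq_or_ne a u with rfl | hau
  · have hb : b ∈ insert v (G.neighborSet v) := h (Set.mem_insert_of_mem _ hab)
    simpa [hab.ne.symm, eq_comm] using hb
  rcases eq_or_ne b u with rfl | hbu
  · have ha : a ∈ insert v (G.neighborSet v) := h (Set.mem_insert_of_mem _ hab.symm)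
    simpa [hau, eq_comm, G.adj_comm] using ha
  · simp [hau, hbu, hab]

end Replace

theorem replaceVertex_TSReachable_general {V : Type*} [DecidableEq V]
    (G : SimpleGraph V) (u v : V)
    (h : insert u (G.neighborSet u) ⊆ insert v (G.neighborSet v))
    (Ds Dt : Multiset V)
    (hreach : TSReachable G Ds Dt) :
    TSReachable G (replaceVertex Ds u v) (replaceVertex Dt u v) := by
  rw [replaceVertex_eq_map_update, replaceVertex_eq_map_update]
  exact hreach.map (closedNeighborSet_subset_update h) (fun _ _ => update_eq_or_adj h)

/-- If the closed neighborhood of `u` is contained in the closed neighborhood of `v`,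
then replacing every occurrence of `u` by `v` along a TS-reconfiguration sequence
again yields a TS-reconfiguration sequence. -/
theorem replaceVertex_TSReachable {V : Type*} [Fintype V] [DecidableEq V]
    (G : SimpleGraph V) (u v : V)
    (h : insert u (G.neighborSet u) ⊆ insert v (G.neighborSet v))
    (Ds Dt : Multiset V)
    (hDs : IsDominatingMultiset G Ds) (hDt : IsDominatingMultiset G Dt)
    (hreach : TSReachable G Ds Dt) :
    TSReachable G (replaceVertex Ds u v) (replaceVertex Dt u v) :=
  replaceVertex_TSReachable_general G u v h Ds Dt hreach
end

section
/- For every integer k ≥ 1, a multiset D of vertices of the cycle C_{3k} of cardinality k is a dominating multiset if and only if D is (as a multiset, i.e., with all multiplicities equal to 1) one of the three sets D_r = { i ∈ ℤ/3kℤ : i ≡ r (mod 3) } for r ∈ {0, 1, 2}. In particular, C_{3k} has exactly three dominating multisets of size k. -/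
/-- The cycle graph `C_n` on vertex set `ℤ/nℤ`: `i` and `j` are adjacent
iff `i - j ≡ ±1 (mod n)`. -/
def cycleGraph (n : ℕ) : SimpleGraph (ZMod n) where
  Adj i j := i ≠ j ∧ (i - j = 1 ∨ j - i = 1)
  symm := by
    constructor
    intro i j hij
    exact ⟨hij.1.symm, hij.2.symm⟩
  loopless := by
    constructor
    intro i hi
    exact hi.1 rfl

/-- The set `D_r = { i ∈ ℤ/3kℤ : i ≡ r (mod 3) }`, as a multiset. -/
def Dres (k r : ℕ) [NeZero (3 * k)] : Multiset (ZMod (3 * k)) :=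
  (Finset.univ.filter fun i : ZMod (3 * k) => i.val % 3 = r).val

/-!
The closed neighbourhoods `{u - 1, u, u + 1}` of the `k` members `u` of a dominating multiset
`D` of `C_{3k}` have total size `3k` and cover all `3k` vertices, so they partition the vertex
set. For `u ∈ D`, the vertex `u + 2` then lies in the neighbourhood of some `v ∈ D`; neither
`v = u + 1` nor `v = u + 2` is possible, since both neighbourhoods meet that of `u` in `u + 1`.
Hence `u + 3 ∈ D`, so `D` contains the whole residue class of `u` modulo `3`, which already
has `k` elements.
-/

theorem Multiset.nodup_of_forall_mem_of_card_le {α : Type*} [Fintype α] [DecidableEq α]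
    {m : Multiset α} (hmem : ∀ a, a ∈ m) (hcard : Multiset.card m ≤ Fintype.card α) :
    m.Nodup := by
  have huniv : m.toFinset = Finset.univ := Finset.eq_univ_of_forall fun a => by simpa using hmem a
  rw [← Multiset.toFinset_card_eq_card_iff_nodup]
  refine le_antisymm (Multiset.toFinset_card_le m) ?_
  rwa [huniv, Finset.card_univ]

theorem Multiset.Nodup.eq_of_mem_bind {ι α : Type*} {s : Multiset ι} {f : ι → Multiset α}
    (h : (s.bind f).Nodup) {i j : ι} (hi : i ∈ s) (hj : j ∈ s) {a : α} (hai : a ∈ f i)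
    (haj : a ∈ f j) : i = j := by
  by_contra hij
  exact Multiset.disjoint_left.1 ((Multiset.nodup_bind.1 h).2.forall hi hj hij) hai haj

theorem ZMod.natCast_ne_zero_of_pos_of_lt {n m : ℕ} (hm : 0 < m) (hmn : m < n) :
    (m : ZMod n) ≠ 0 := by
  rw [Ne, ZMod.natCast_eq_zero_iff]
  exact fun h => (Nat.le_of_dvd hm h).not_gt hmn

/-- A multiset rather than a finset, so that `D.bind cycleClosedNbhd` has exactly `3 * card D`
elements, counted with multiplicity. -/
def cycleClosedNbhd {n : ℕ} (u : ZMod n) : Multiset (ZMod n) :=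
  {u - 1, u, u + 1}

theorem mem_cycleClosedNbhd {n : ℕ} {u w : ZMod n} :
    w ∈ cycleClosedNbhd u ↔ w = u - 1 ∨ w = u ∨ w = u + 1 := by
  simp [cycleClosedNbhd]

theorem card_bind_cycleClosedNbhd {n : ℕ} (D : Multiset (ZMod n)) :
    Multiset.card (D.bind cycleClosedNbhd) = 3 * Multiset.card D := by
  simp [Multiset.card_bind, Function.comp_def, cycleClosedNbhd, mul_comm]

theorem isDominatingMultiset_cycleGraph_iff {n : ℕ} (hn : (1 : ZMod n) ≠ 0)
    {D : Multiset (ZMod n)} :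
    IsDominatingMultiset (cycleGraph n) D ↔ ∀ w, ∃ u ∈ D, w ∈ cycleClosedNbhd u := by
  refine forall_congr' fun w => ⟨?_, ?_⟩
  · rintro (hw | ⟨u, hu, -, h | h⟩)
    · exact ⟨w, hw, mem_cycleClosedNbhd.2 (Or.inr (Or.inl rfl))⟩
    · exact ⟨u, hu, mem_cycleClosedNbhd.2 (Or.inl (by linear_combination -h))⟩
    · exact ⟨u, hu, mem_cycleClosedNbhd.2 (Or.inr (Or.inr (by linear_combination h)))⟩
  · rintro ⟨u, hu, hw⟩
    rcases mem_cycleClosedNbhd.1 hw with rfl | rfl | rfl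
    · exact Or.inr ⟨u, hu, fun h => hn (by linear_combination h), Or.inl (by ring)⟩
    · exact Or.inl hu
    · exact Or.inr ⟨u, hu, fun h => hn (by linear_combination -h), Or.inr (by ring)⟩

section

variable {k : ℕ} [NeZero (3 * k)]

theorem one_le_of_neZero_three_mul : 1 ≤ k := by
  have := NeZero.ne (3 * k)
  omega

theorem one_ne_zero_zmod_three_mul : (1 : ZMod (3 * k)) ≠ 0 := by
  have := one_le_of_neZero_three_mul (k := k)
  exact_mod_cast ZMod.natCast_ne_zero_of_pos_of_lt (n := 3 * k) one_pos (by omega)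

theorem two_ne_zero_zmod_three_mul : (2 : ZMod (3 * k)) ≠ 0 := by
  have := one_le_of_neZero_three_mul (k := k)
  exact_mod_cast ZMod.natCast_ne_zero_of_pos_of_lt (n := 3 * k) two_pos (by omega)

theorem nodup_bind_cycleClosedNbhd {D : Multiset (ZMod (3 * k))} (hD : Multiset.card D = k)
    (hdom : ∀ w, ∃ u ∈ D, w ∈ cycleClosedNbhd u) : (D.bind cycleClosedNbhd).Nodup :=
  Multiset.nodup_of_forall_mem_of_card_le (fun w => Multiset.mem_bind.2 (hdom w))
    (by rw [card_bind_cycleClosedNbhd, ZMod.card, hD])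

theorem add_three_mem_of_nodup_bind {D : Multiset (ZMod (3 * k))}
    (hdom : ∀ w, ∃ u ∈ D, w ∈ cycleClosedNbhd u) (hperfect : (D.bind cycleClosedNbhd).Nodup)
    {u : ZMod (3 * k)} (hu : u ∈ D) : u + 3 ∈ D := by
  obtain ⟨v, hv, hcov⟩ := hdom (u + 2)
  have hshared : u + 1 ∈ cycleClosedNbhd v → u = v := fun h =>
    hperfect.eq_of_mem_bind hu hv (mem_cycleClosedNbhd.2 (Or.inr (Or.inr rfl))) h
  rcases mem_cycleClosedNbhd.1 hcov with h | h | h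
  · convert hv using 1
    linear_combination h
  · refine absurd (hshared (mem_cycleClosedNbhd.2 (Or.inl ?_))) fun huv => ?_
    · rw [← h]; ring
    · exact two_ne_zero_zmod_three_mul (by linear_combination h - huv)
  · refine absurd (hshared (mem_cycleClosedNbhd.2 (Or.inr (Or.inl ?_)))) fun huv => ?_
    · linear_combination h
    · exact one_ne_zero_zmod_three_mul (by linear_combination h - huv)

theorem exists_eq_add_three_mul {i u : ZMod (3 * k)} (h : i.val % 3 = u.val % 3) :
    ∃ m : ℕ, i = u + 3 * m := by
  have hu := ZMod.val_lt u
  obtain ⟨m, hm⟩ : 3 ∣ i.val + 3 * k - u.val := by omega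
  refine ⟨m, ?_⟩
  have hcast : ((i.val + 3 * k - u.val : ℕ) : ZMod (3 * k)) = i - u := by
    rw [Nat.cast_sub (by omega), Nat.cast_add, ZMod.natCast_self, ZMod.natCast_zmod_val,
      ZMod.natCast_zmod_val, add_zero]
  rw [hm] at hcast
  push_cast at hcast
  linear_combination -hcast

theorem mem_Dres {r : ℕ} {i : ZMod (3 * k)} : i ∈ Dres k r ↔ i.val % 3 = r := by
  simp [Dres]

theorem mem_Dres_iff_castHom {r : ℕ} (hr : r < 3) {i : ZMod (3 * k)} :
    i ∈ Dres k r ↔ ZMod.castHom (dvd_mul_right 3 k) (ZMod 3) i = r := by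
  rw [mem_Dres, ← (ZMod.val_injective 3).eq_iff, ZMod.val_cast_of_lt hr, ZMod.castHom_apply,
    ← ZMod.natCast_val, ZMod.val_natCast]

theorem card_Dres {r : ℕ} (hr : r < 3) : Multiset.card (Dres k r) = k := by
  have hval : ∀ m < 3 * k, (m : ZMod (3 * k)).val = m := fun m hm => ZMod.val_cast_of_lt hm
  calc Multiset.card (Dres k r) = ((Finset.range (3 * k)).filter (· ≡ r [MOD 3])).card := by
        refine Finset.card_nbij' ZMod.val (fun m => (m : ZMod (3 * k))) ?_ ?_ ?_ ?_
        · intro i hi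
          simp_all [Nat.ModEq, Nat.mod_eq_of_lt hr, ZMod.val_lt]
        · intro m hm
          simp_all [Nat.ModEq, Nat.mod_eq_of_lt hr]
        · intro i _
          exact ZMod.natCast_zmod_val i
        · intro m hm
          exact hval m (Finset.mem_range.1 (Finset.mem_filter.1 hm).1)
    _ = Nat.count (· ≡ r [MOD 3]) (3 * k) := (Nat.count_eq_card_filter_range _ _).symm
    _ = k := by simp [Nat.count_modEq_card _ three_pos]
theorem Dres_ne {r r' : ℕ} (hr : r < 3) (hne : r ≠ r') : Dres k r ≠ Dres k r' := by
  have hval : (r : ZMod (3 * k)).val = r := by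
    have := one_le_of_neZero_three_mul (k := k)
    exact ZMod.val_cast_of_lt (by omega)
  intro h
  have hmem : (r : ZMod (3 * k)) ∈ Dres k r := mem_Dres.2 (by rw [hval, Nat.mod_eq_of_lt hr])
  rw [h, mem_Dres, hval, Nat.mod_eq_of_lt hr] at hmem
  exact hne hmem

theorem isDominatingMultiset_Dres {r : ℕ} (hr : r < 3) :
    IsDominatingMultiset (cycleGraph (3 * k)) (Dres k r) := by
  rw [isDominatingMultiset_cycleGraph_iff one_ne_zero_zmod_three_mul]
  intro w
  have hres : ∀ x y : ZMod 3, y = x ∨ y = x + 1 ∨ y = x - 1 := by decide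
  rcases hres (ZMod.castHom (dvd_mul_right 3 k) (ZMod 3) w) r with h | h | h
  · exact ⟨w, (mem_Dres_iff_castHom hr).2 h.symm, mem_cycleClosedNbhd.2 (Or.inr (Or.inl rfl))⟩
  · refine ⟨w + 1, (mem_Dres_iff_castHom hr).2 ?_, mem_cycleClosedNbhd.2 (Or.inl (by ring))⟩
    rw [map_add, map_one, h]
  · refine ⟨w - 1, (mem_Dres_iff_castHom hr).2 ?_,
      mem_cycleClosedNbhd.2 (Or.inr (Or.inr (by ring)))⟩
    rw [map_sub, map_one, h]

theorem exists_eq_Dres_of_isDominatingMultiset {D : Multiset (ZMod (3 * k))}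
    (hD : Multiset.card D = k) (hdom : IsDominatingMultiset (cycleGraph (3 * k)) D) :
    ∃ r : ℕ, r < 3 ∧ D = Dres k r := by
  rw [isDominatingMultiset_cycleGraph_iff one_ne_zero_zmod_three_mul] at hdom
  have hstep : ∀ u ∈ D, u + 3 ∈ D := fun u hu =>
    add_three_mem_of_nodup_bind hdom (nodup_bind_cycleClosedNbhd hD hdom) hu
  have hiter : ∀ u ∈ D, ∀ m : ℕ, u + 3 * m ∈ D := by
    intro u hu m
    induction m with
    | zero => simpa using hu
    | succ m ih => simpa [mul_add, add_assoc] using hstep _ ih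
  obtain ⟨u, hu⟩ := Multiset.card_pos_iff_exists_mem.1
    (by rw [hD]; exact one_le_of_neZero_three_mul : 0 < Multiset.card D)
  have hr : u.val % 3 < 3 := Nat.mod_lt _ three_pos
  have hle : Dres k (u.val % 3) ≤ D := by
    refine (Multiset.le_iff_subset (Finset.nodup _)).2 fun i hi => ?_
    obtain ⟨m, rfl⟩ := exists_eq_add_three_mul (mem_Dres.1 hi)
    exact hiter u hu m
  exact ⟨u.val % 3, hr, (Multiset.eq_of_le_of_card_le hle (by rw [hD, card_Dres hr])).symm⟩

end

theorem cycle_dominating_multisets_general (k : ℕ) [NeZero (3 * k)] :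
    (∀ D : Multiset (ZMod (3 * k)), Multiset.card D = k →
      (IsDominatingMultiset (cycleGraph (3 * k)) D ↔ ∃ r : ℕ, r < 3 ∧ D = Dres k r)) ∧
    (∀ r : ℕ, r < 3 → Multiset.card (Dres k r) = k) ∧
    (∀ r r' : ℕ, r < 3 → r' < 3 → r ≠ r' → Dres k r ≠ Dres k r') := by
  refine ⟨fun D hD => ⟨exists_eq_Dres_of_isDominatingMultiset hD, ?_⟩,
    fun r hr => card_Dres hr, fun r r' hr _ hne => Dres_ne hr hne⟩
  rintro ⟨r, hr, rfl⟩
  exact isDominatingMultiset_Dres hr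

/-- A multiset of `k` vertices of `C_{3k}` is dominating iff it is one of the three
sets `D_r = { i : i ≡ r (mod 3) }` for `r ∈ {0,1,2}`; these three sets have size `k`
and are pairwise distinct, so `C_{3k}` has exactly three dominating multisets of size `k`. -/
theorem cycle_dominating_multisets (k : ℕ) (hk : 1 ≤ k) [NeZero (3 * k)] :
    (∀ D : Multiset (ZMod (3 * k)), Multiset.card D = k →
      (IsDominatingMultiset (cycleGraph (3 * k)) D ↔ ∃ r : ℕ, r < 3 ∧ D = Dres k r)) ∧
    (∀ r : ℕ, r < 3 → Multiset.card (Dres k r) = k) ∧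
    (∀ r r' : ℕ, r < 3 → r' < 3 → r ≠ r' → Dres k r ≠ Dres k r') :=
  cycle_dominating_multisets_general k
end
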